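/- Let Ω₃ := (3/2)Δ − (1/2)id₃ be the qutrit-to-qutrit channel, where Δ is the completely dephasing channel on M₃(ℂ) and id₃ is the identity channel. Then (id ⊗ Ω₃)(Φ₃) = ω₃ = (1/2)(P₃ − Φ₃), and consequently the channel tempered negativity satisfies N_τ(Ω₃) ≥ 2, i.e. E_N^τ(Ω₃) = log₂ N_τ(Ω₃) ≥ 1. -/

import Mathlib

open Matrix
open scoped ComplexOrder

section Defs

variable {ιA ιB : Type*}

def ptranspose (M : Matrix (ιA × ιB) (ιA × ιB) ℂ) : Matrix (ιA × ιB) (ιA × ιB) ℂ :=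
  Matrix.of fun p q => M (p.1, q.2) (q.1, p.2)

def IsPPT [Fintype ιA] [Fintype ιB] (M : Matrix (ιA × ιB) (ιA × ιB) ℂ) : Prop :=
  M.PosSemidef ∧ (ptranspose M).PosSemidef

def IsState {ι : Type*} [Fintype ι] (ρ : Matrix ι ι ℂ) : Prop :=
  ρ.PosSemidef ∧ ρ.trace = 1

def idTensor (ιR : Type*) (Φ : Matrix ιA ιA ℂ →ₗ[ℂ] Matrix ιB ιB ℂ) :
    Matrix (ιR × ιA) (ιR × ιA) ℂ →ₗ[ℂ] Matrix (ιR × ιB) (ιR × ιB) ℂ where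
  toFun M := Matrix.of fun p q => Φ (Matrix.of fun a b => M (p.1, a) (q.1, b)) p.2 q.2
  map_add' M N := by
    funext p q
    show Φ ((Matrix.of fun a b => M (p.1, a) (q.1, b)) + (Matrix.of fun a b => N (p.1, a) (q.1, b))) p.2 q.2 = _
    rw [map_add]
    rfl
  map_smul' c M := by
    funext p q
    show Φ (c • (Matrix.of fun a b => M (p.1, a) (q.1, b))) p.2 q.2 = _
    rw [_root_.map_smul]
    rfl

noncomputable def opNorm {ι : Type*} [Fintype ι] [DecidableEq ι] (M : Matrix ι ι ℂ) : ℝ :=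
  ‖Matrix.toEuclideanCLM (𝕜 := ℂ) (n := ι) M‖

noncomputable def traceNorm {ι : Type*} [Fintype ι] [DecidableEq ι] (M : Matrix ι ι ℂ) : ℝ :=
  (((Matrix.posSemidef_conjTranspose_mul_self M).1.eigenvectorUnitary.1 *
      Matrix.diagonal (((↑) : ℝ → ℂ) ∘ (√·) ∘ (Matrix.posSemidef_conjTranspose_mul_self M).1.eigenvalues) *
      (star (Matrix.posSemidef_conjTranspose_mul_self M).1.eigenvectorUnitary : Matrix ι ι ℂ)).trace).re

/-- The tempered negativity `N_τ(ρ|ω)`. -/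
noncomputable def temperedNegRel [Fintype ιA] [Fintype ιB] [DecidableEq ιA] [DecidableEq ιB]
    (ρ ω : Matrix (ιA × ιB) (ιA × ιB) ℂ) : ℝ :=
  sSup {t : ℝ | ∃ X : Matrix (ιA × ιB) (ιA × ιB) ℂ, X.IsHermitian ∧
    opNorm (ptranspose X) ≤ 1 ∧ opNorm X = ((X * ω).trace).re ∧ t = ((X * ρ).trace).re}

noncomputable def temperedNeg [Fintype ιA] [Fintype ιB] [DecidableEq ιA] [DecidableEq ιB]
    (ρ : Matrix (ιA × ιB) (ιA × ιB) ℂ) : ℝ :=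
  temperedNegRel ρ ρ

/-- The tempered PPT robustness `R^τ(ρ|ω)`, via `1 + 2 R^τ(ρ|ω) = sup {...}`. -/
noncomputable def temperedRobRel [Fintype ιA] [Fintype ιB] [DecidableEq ιA] [DecidableEq ιB]
    (ρ ω : Matrix (ιA × ιB) (ιA × ιB) ℂ) : ℝ :=
  (sSup {t : ℝ | ∃ X : Matrix (ιA × ιB) (ιA × ιB) ℂ, X.IsHermitian ∧
    (∀ W : Matrix (ιA × ιB) (ιA × ιB) ℂ, IsPPT W → |((X * W).trace).re| ≤ (W.trace).re) ∧
    opNorm X = ((X * ω).trace).re ∧ t = ((X * ρ).trace).re} - 1) / 2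

noncomputable def temperedRob [Fintype ιA] [Fintype ιB] [DecidableEq ιA] [DecidableEq ιB]
    (ρ : Matrix (ιA × ιB) (ιA × ιB) ℂ) : ℝ :=
  temperedRobRel ρ ρ

/-- The channel tempered negativity. -/
noncomputable def chanTemperedNeg [Fintype ιA] [Fintype ιB] [DecidableEq ιA] [DecidableEq ιB]
    (Λ : Matrix ιA ιA ℂ →ₗ[ℂ] Matrix ιB ιB ℂ) : ℝ :=
  sSup {t : ℝ | ∃ ρ : Matrix (ιA × ιA) (ιA × ιA) ℂ, IsState ρ ∧
    t = temperedNeg ((idTensor ιA Λ) ρ)}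

/-- The channel tempered robustness `R^τ(Λ'|Λ)`. -/
noncomputable def chanTemperedRobRel [Fintype ιA] [Fintype ιB] [DecidableEq ιA] [DecidableEq ιB]
    (Λ' Λ : Matrix ιA ιA ℂ →ₗ[ℂ] Matrix ιB ιB ℂ) : ℝ :=
  sSup {t : ℝ | ∃ ρ : Matrix (ιA × ιA) (ιA × ιA) ℂ, IsState ρ ∧
    t = temperedRobRel ((idTensor ιA Λ') ρ) ((idTensor ιA Λ) ρ)}

/-- The diamond norm. -/
noncomputable def diamondNorm [Fintype ιA] [Fintype ιB] [DecidableEq ιA] [DecidableEq ιB]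
    (Φ : Matrix ιA ιA ℂ →ₗ[ℂ] Matrix ιB ιB ℂ) : ℝ :=
  sSup {t : ℝ | ∃ ρ : Matrix (ιA × ιA) (ιA × ιA) ℂ, IsState ρ ∧
    t = traceNorm ((idTensor ιA Φ) ρ)}

/-- The `n`-fold tensor power of a linear map on matrices. -/
noncomputable def tensorPow [Fintype ιA] [DecidableEq ιA] (n : ℕ)
    (Λ : Matrix ιA ιA ℂ →ₗ[ℂ] Matrix ιB ιB ℂ) :
    Matrix (Fin n → ιA) (Fin n → ιA) ℂ →ₗ[ℂ] Matrix (Fin n → ιB) (Fin n → ιB) ℂ where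
  toFun M := Matrix.of fun p q => ∑ a : Fin n → ιA, ∑ b : Fin n → ιA,
      M a b * ∏ i, Λ (Matrix.single (a i) (b i) 1) (p i) (q i)
  map_add' M N := by
    funext p q
    simp [Matrix.add_apply, add_mul, Finset.sum_add_distrib]
  map_smul' c M := by
    funext p q
    simp [Matrix.smul_apply, Finset.mul_sum, mul_assoc]

/-- The `n`-fold tensor power of a bipartite state, regarded as bipartite across the `Aⁿ:Bⁿ` cut. -/
noncomputable def statePow (n : ℕ) (ρ : Matrix (ιA × ιB) (ιA × ιB) ℂ) :
    Matrix ((Fin n → ιA) × (Fin n → ιB)) ((Fin n → ιA) × (Fin n → ιB)) ℂ :=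
  Matrix.of fun p q => ∏ i, ρ (p.1 i, p.2 i) (q.1 i, q.2 i)

/-- The Choi matrix `J_Φ = (1/d_A) ∑_{ij} |i⟩⟨j| ⊗ Φ(|i⟩⟨j|)`. -/
noncomputable def choi [Fintype ιA] [DecidableEq ιA]
    (Φ : Matrix ιA ιA ℂ →ₗ[ℂ] Matrix ιB ιB ℂ) : Matrix (ιA × ιB) (ιA × ιB) ℂ :=
  Matrix.of fun p q => (Fintype.card ιA : ℂ)⁻¹ * Φ (Matrix.single p.1 q.1 1) p.2 q.2


/-- Complete positivity. -/
def IsCP [Fintype ιA] [Fintype ιB] (Φ : Matrix ιA ιA ℂ →ₗ[ℂ] Matrix ιB ιB ℂ) : Prop :=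
  ∀ (k : ℕ) (X : Matrix (Fin k × ιA) (Fin k × ιA) ℂ), X.PosSemidef →
    ((idTensor (Fin k) Φ) X).PosSemidef

/-- Trace preservation. -/
def IsTP [Fintype ιA] [Fintype ιB] (Φ : Matrix ιA ιA ℂ →ₗ[ℂ] Matrix ιB ιB ℂ) : Prop :=
  ∀ X : Matrix ιA ιA ℂ, (Φ X).trace = X.trace

/-- A quantum channel: completely positive and trace preserving. -/
def IsChannel [Fintype ιA] [Fintype ιB] (Φ : Matrix ιA ιA ℂ →ₗ[ℂ] Matrix ιB ιB ℂ) : Prop :=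
  IsCP Φ ∧ IsTP Φ

/-- A map is PPT-binding if `id_k ⊗ Φ` sends positive semidefinite matrices to PPT matrices. -/
def PPTBinding [Fintype ιA] [Fintype ιB] (Φ : Matrix ιA ιA ℂ →ₗ[ℂ] Matrix ιB ιB ℂ) : Prop :=
  ∀ (k : ℕ) (X : Matrix (Fin k × ιA) (Fin k × ιA) ℂ), X.PosSemidef →
    IsPPT ((idTensor (Fin k) Φ) X)

/-- A PPT-binding channel. -/
def PPTBindingChannel [Fintype ιA] [Fintype ιB] (Φ : Matrix ιA ιA ℂ →ₗ[ℂ] Matrix ιB ιB ℂ) : Prop :=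
  IsChannel Φ ∧ PPTBinding Φ

/-- The channel robustness with respect to PPT-binding channels. -/
noncomputable def RKE [Fintype ιA] [Fintype ιB] (Λ : Matrix ιA ιA ℂ →ₗ[ℂ] Matrix ιB ιB ℂ) : ℝ :=
  sInf {l : ℝ | 0 ≤ l ∧ ∃ Γ Θ : Matrix ιA ιA ℂ →ₗ[ℂ] Matrix ιB ιB ℂ,
    PPTBindingChannel Γ ∧ PPTBindingChannel Θ ∧ Λ + (l : ℂ) • Γ = ((1 + l : ℝ) : ℂ) • Θ}

/-- The PPT robustness of a state. -/
noncomputable def RPPT [Fintype ιA] [Fintype ιB] (ρ : Matrix (ιA × ιB) (ιA × ιB) ℂ) : ℝ :=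
  sInf {t : ℝ | ∃ δ : Matrix (ιA × ιB) (ιA × ιB) ℂ, IsPPT δ ∧ IsPPT (ρ + δ) ∧ (δ.trace).re = t}


end Defs

/-- The projector `P₃ = ∑ᵢ |ii⟩⟨ii|` onto the maximally correlated subspace of `ℂ³ ⊗ ℂ³`. -/
noncomputable def P3 : Matrix (Fin 3 × Fin 3) (Fin 3 × Fin 3) ℂ :=
  Matrix.of fun p q => if p.1 = p.2 ∧ q.1 = q.2 ∧ p.1 = q.1 then 1 else 0

/-- The maximally entangled two-qutrit state `Φ₃ = |Φ₃⟩⟨Φ₃|`, `|Φ₃⟩ = (1/√3) ∑ᵢ |ii⟩`. -/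
noncomputable def Phi3 : Matrix (Fin 3 × Fin 3) (Fin 3 × Fin 3) ℂ :=
  Matrix.of fun p q => if p.1 = p.2 ∧ q.1 = q.2 then 1 / 3 else 0

/-- The two-qutrit state `ω₃ = (1/2)(P₃ − Φ₃)`. -/
noncomputable def omega3 : Matrix (Fin 3 × Fin 3) (Fin 3 × Fin 3) ℂ :=
  (1 / 2 : ℂ) • (P3 - Phi3)

/-- The completely dephasing qutrit channel `Δ(X) = ∑ᵢ |i⟩⟨i| X |i⟩⟨i|`. -/
noncomputable def dephase : Matrix (Fin 3) (Fin 3) ℂ →ₗ[ℂ] Matrix (Fin 3) (Fin 3) ℂ where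
  toFun X := Matrix.of fun i j => if i = j then X i j else 0
  map_add' X Y := by
    funext i j
    by_cases h : i = j <;> simp [Matrix.add_apply, h]
  map_smul' c X := by
    funext i j
    by_cases h : i = j <;> simp [Matrix.smul_apply, h]

/-- The qutrit-to-qutrit channel `Ω₃ = (3/2)Δ − (1/2)id₃`. -/
noncomputable def Omega3 : Matrix (Fin 3) (Fin 3) ℂ →ₗ[ℂ] Matrix (Fin 3) (Fin 3) ℂ :=
  (3 / 2 : ℂ) • dephase - (1 / 2 : ℂ) • LinearMap.id

/-!
The Choi state `(id ⊗ Ω₃)(Φ₃)` is `ω₃ = q / 2`, where `q = P₃ - Φ₃` is a projection with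
`Φ₃ q = 0`. Take `X = 2q - Φ₃`. Its partial transpose is `2P₃ - F`, with `F` the swap, and this
is a self-adjoint involution, so `‖X^Γ‖ = 1`. Writing `X = (2q - 1) + (1 - Φ₃)` gives `‖X‖ ≤ 2`,
and `X q = 2q` gives `‖X‖ ≥ 2`. Also `Tr(X ω₃) = Tr q = 2`, so `N_τ(ω₃) ≥ 2`.
All these suprema are finite: the entries of `X` are entries of `X^Γ`, which gives
`Tr(X σ) ≤ ∑ |σ_pq|`, and the entries of a state are bounded by `1`.
-/

theorem IsStarProjection.norm_two_smul_sub {E : Type*} [CStarAlgebra E] {q e : E}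
    (hq : IsStarProjection q) (he : IsStarProjection e) (heq : e * q = 0) (hq0 : q ≠ 0) :
    ‖(2 : ℂ) • q - e‖ = 2 := by
  have : Nontrivial E := nontrivial_of_ne q 0 hq0
  apply le_antisymm
  · have hsplit : (2 : ℂ) • q - e = (2 * q - 1) + (1 - e) := by
      rw [two_mul, ← two_smul ℂ q]; abel
    calc ‖(2 : ℂ) • q - e‖ ≤ ‖2 * q - 1‖ + ‖1 - e‖ := hsplit ▸ norm_add_le _ _
      _ ≤ 1 + 1 := add_le_add (CStarRing.norm_of_mem_unitary hq.two_mul_sub_one_mem_unitary).le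
          he.one_sub.norm_le
      _ = 2 := by norm_num
  · have hmul : ((2 : ℂ) • q - e) * q = (2 : ℂ) • q := by
      rw [sub_mul, smul_mul_assoc, hq.isIdempotentElem.eq, heq, sub_zero]
    have hle := norm_mul_le ((2 : ℂ) • q - e) q
    rw [hmul, norm_smul] at hle
    norm_num at hle
    exact le_of_mul_le_mul_right hle (norm_pos_iff.mpr hq0)

theorem norm_eq_one_of_isSelfAdjoint_of_mul_self {E : Type*} [NormedRing E] [StarRing E]
    [CStarRing E] [Nontrivial E] {u : E} (hu : IsSelfAdjoint u) (hu2 : u * u = 1) : ‖u‖ = 1 :=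
  CStarRing.norm_of_mem_unitary (Unitary.mem_iff.mpr (by rw [hu.star_eq]; exact ⟨hu2, hu2⟩))

section OpNorm

open scoped Matrix.Norms.L2Operator

variable {ι : Type*} [Fintype ι] [DecidableEq ι]

theorem opNorm_eq_norm (M : Matrix ι ι ℂ) : opNorm M = ‖M‖ := rfl

theorem norm_apply_le_opNorm (M : Matrix ι ι ℂ) (i j : ι) : ‖M i j‖ ≤ opNorm M := by
  have hcol : M i j = toEuclideanCLM (𝕜 := ℂ) M (EuclideanSpace.single j 1) i := by
    simp [EuclideanSpace.single, mulVec_single]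
  calc ‖M i j‖ ≤ ‖toEuclideanCLM (𝕜 := ℂ) M (EuclideanSpace.single j 1)‖ :=
        hcol ▸ PiLp.norm_apply_le _ i
    _ ≤ opNorm M * ‖(EuclideanSpace.single j 1 : EuclideanSpace ℂ ι)‖ :=
        (toEuclideanCLM (𝕜 := ℂ) M).le_opNorm _
    _ = opNorm M := by simp

end OpNorm

theorem norm_apply_le_one_of_isState {ι : Type*} [Fintype ι] {ρ : Matrix ι ι ℂ}
    (hρ : IsState ρ) (i j : ι) : ‖ρ i j‖ ≤ 1 := by
  have hherm := hρ.1.isHermitian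
  have hdiag : ∀ k, ρ k k = ((ρ k k).re : ℂ) := fun k => (hherm.coe_re_apply_self k).symm
  have hdiag_nonneg : ∀ k, 0 ≤ (ρ k k).re := fun k => by
    simpa using (Complex.le_def.mp (hρ.1.diag_nonneg (i := k))).1
  have hdiag_le : ∀ k, (ρ k k).re ≤ 1 := fun k => by
    have hle := Finset.single_le_sum (fun l _ => hρ.1.diag_nonneg (i := l)) (Finset.mem_univ k)
    rw [show ∑ l, ρ l l = 1 from hρ.2] at hle
    exact_mod_cast (Complex.le_def.mp hle).1
  -- the principal `2 × 2` minor on `i, j` is `ρ i i * ρ j j - ‖ρ i j‖ ^ 2 ≥ 0`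
  have hminor := (hρ.1.submatrix ![i, j]).det_nonneg
  rw [det_fin_two] at hminor
  simp only [submatrix_apply, Matrix.cons_val_zero, Matrix.cons_val_one] at hminor
  have hji : ρ j i = starRingEnd ℂ (ρ i j) := (hherm.apply j i).symm
  rw [hji, hdiag i, hdiag j, Complex.mul_conj', ← Complex.ofReal_mul, ← Complex.ofReal_pow,
    ← Complex.ofReal_sub, Complex.zero_le_real] at hminor
  nlinarith [hdiag_nonneg i, hdiag_nonneg j, hdiag_le i, hdiag_le j, norm_nonneg (ρ i j)]

theorem idTensor_apply {ιR ιA ιB : Type*} (Φ : Matrix ιA ιA ℂ →ₗ[ℂ] Matrix ιB ιB ℂ)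
    (M : Matrix (ιR × ιA) (ιR × ιA) ℂ) (p q : ιR × ιB) :
    idTensor ιR Φ M p q = Φ (of fun a b => M (p.1, a) (q.1, b)) p.2 q.2 := rfl

theorem norm_linearMap_apply_le {m n : Type*} [Fintype m] [DecidableEq m]
    (L : Matrix m m ℂ →ₗ[ℂ] Matrix n n ℂ) {ρ : Matrix m m ℂ} (hρ : ∀ a b, ‖ρ a b‖ ≤ 1)
    (p q : n) : ‖L ρ p q‖ ≤ ∑ a, ∑ b, ‖L (single a b 1) p q‖ := by
  have hexpand : L ρ p q = ∑ a, ∑ b, ρ a b * L (single a b 1) p q := by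
    have hsingle : ∀ a b, single a b (ρ a b) = ρ a b • single a b (1 : ℂ) := fun a b => by
      rw [smul_single, smul_eq_mul, mul_one]
    conv_lhs => rw [matrix_eq_sum_single ρ]
    simp only [hsingle, map_sum, map_smul, Matrix.sum_apply, Matrix.smul_apply, smul_eq_mul]
  rw [hexpand]
  refine (norm_sum_le _ _).trans (Finset.sum_le_sum fun a _ => ?_)
  refine (norm_sum_le _ _).trans (Finset.sum_le_sum fun b _ => ?_)
  rw [norm_mul]
  exact mul_le_of_le_one_left (norm_nonneg _) (hρ a b)

theorem re_trace_mul_le_sum_norm {κ : Type*} [Fintype κ] {X σ : Matrix κ κ ℂ}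
    (hX : ∀ p q, ‖X p q‖ ≤ 1) : ((X * σ).trace).re ≤ ∑ p, ∑ q, ‖σ p q‖ := by
  calc ((X * σ).trace).re ≤ ‖(X * σ).trace‖ := Complex.re_le_norm _
    _ ≤ ∑ p, ∑ q, ‖X p q * σ q p‖ :=
        (norm_sum_le _ _).trans (Finset.sum_le_sum fun p _ => norm_sum_le _ _)
    _ ≤ ∑ p, ∑ q, ‖σ q p‖ := by
        gcongr with p _ q _
        rw [norm_mul]
        exact mul_le_of_le_one_left (norm_nonneg _) (hX p q)
    _ = ∑ p, ∑ q, ‖σ p q‖ := Finset.sum_comm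

section TemperedNeg

variable {ιA ιB : Type*} [Fintype ιA] [Fintype ιB] [DecidableEq ιA] [DecidableEq ιB]

theorem norm_apply_le_opNorm_ptranspose (X : Matrix (ιA × ιB) (ιA × ιB) ℂ) (p q : ιA × ιB) :
    ‖X p q‖ ≤ opNorm (ptranspose X) :=
  norm_apply_le_opNorm (ptranspose X) (p.1, q.2) (q.1, p.2)

theorem temperedNegRel_le_sum_norm (ρ ω : Matrix (ιA × ιB) (ιA × ιB) ℂ) :
    temperedNegRel ρ ω ≤ ∑ p, ∑ q, ‖ρ p q‖ := by
  refine Real.sSup_le ?_ (by positivity)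
  rintro _ ⟨X, -, hXΓ, -, rfl⟩
  exact re_trace_mul_le_sum_norm fun p q => (norm_apply_le_opNorm_ptranspose X p q).trans hXΓ

theorem le_temperedNegRel {ρ ω X : Matrix (ιA × ιB) (ιA × ιB) ℂ} (hX : X.IsHermitian)
    (hXΓ : opNorm (ptranspose X) ≤ 1) (hXω : opNorm X = ((X * ω).trace).re) :
    ((X * ρ).trace).re ≤ temperedNegRel ρ ω := by
  refine le_csSup ⟨∑ p, ∑ q, ‖ρ p q‖, ?_⟩ ⟨X, hX, hXΓ, hXω, rfl⟩
  rintro _ ⟨Y, -, hYΓ, -, rfl⟩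
  exact re_trace_mul_le_sum_norm fun p q => (norm_apply_le_opNorm_ptranspose Y p q).trans hYΓ

theorem temperedNeg_le_chanTemperedNeg (Λ : Matrix ιA ιA ℂ →ₗ[ℂ] Matrix ιB ιB ℂ)
    {ρ : Matrix (ιA × ιA) (ιA × ιA) ℂ} (hρ : IsState ρ) :
    temperedNeg (idTensor ιA Λ ρ) ≤ chanTemperedNeg Λ := by
  refine le_csSup ⟨∑ p, ∑ q, ∑ a, ∑ b, ‖idTensor ιA Λ (single a b 1) p q‖, ?_⟩ ⟨ρ, hρ, rfl⟩
  rintro _ ⟨σ, hσ, rfl⟩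
  refine (temperedNegRel_le_sum_norm _ _).trans (Finset.sum_le_sum fun p _ => ?_)
  exact Finset.sum_le_sum fun q _ =>
    norm_linearMap_apply_le _ (norm_apply_le_one_of_isState hσ) p q

end TemperedNeg

def swapMatrix (ι : Type*) [DecidableEq ι] : Matrix (ι × ι) (ι × ι) ℂ :=
  of fun p q => if p.swap = q then 1 else 0

section Swap

variable {ι : Type*} [DecidableEq ι]

theorem isSelfAdjoint_swapMatrix : IsSelfAdjoint (swapMatrix ι) := by
  ext p q
  have hsymm : q.swap = p ↔ p.swap = q := by rw [Prod.swap_eq_iff_eq_swap, eq_comm]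
  simp [swapMatrix, star_apply, hsymm]

variable [Fintype ι]

theorem mul_swapMatrix_apply (M : Matrix (ι × ι) (ι × ι) ℂ) (p q : ι × ι) :
    (M * swapMatrix ι) p q = M p q.swap := by
  simp [swapMatrix, mul_apply, Prod.swap_eq_iff_eq_swap]

theorem swapMatrix_mul_apply (M : Matrix (ι × ι) (ι × ι) ℂ) (p q : ι × ι) :
    (swapMatrix ι * M) p q = M p.swap q := by
  simp [swapMatrix, mul_apply]

theorem swapMatrix_mul_self : swapMatrix ι * swapMatrix ι = 1 := by
  ext p q
  rw [swapMatrix_mul_apply]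
  simp [swapMatrix, one_apply]

end Swap

/-- `√3 |Φ₃⟩`. -/
def diagVec : Fin 3 × Fin 3 → ℂ := fun p => if p.1 = p.2 then 1 else 0

theorem diagVec_mul_self : diagVec * diagVec = diagVec := by
  ext p
  by_cases h : p.1 = p.2 <;> simp [diagVec, h]

theorem star_diagVec : star diagVec = diagVec := by
  ext p
  by_cases h : p.1 = p.2 <;> simp [diagVec, h]

theorem diagVec_dotProduct_self : diagVec ⬝ᵥ diagVec = 3 := by
  simp [dotProduct, diagVec, Fintype.sum_prod_type]

theorem P3_eq_diagonal : P3 = diagonal diagVec := by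
  ext ⟨i, j⟩ ⟨k, l⟩
  simp [P3, diagVec, diagonal_apply]
  grind

theorem Phi3_eq_vecMulVec : Phi3 = (3 : ℂ)⁻¹ • vecMulVec diagVec diagVec := by
  ext ⟨i, j⟩ ⟨k, l⟩
  simp [Phi3, diagVec, vecMulVec_apply]
  grind

theorem isStarProjection_P3 : IsStarProjection P3 := by
  rw [isStarProjection_iff', P3_eq_diagonal, diagonal_mul_diagonal, star_eq_conjTranspose,
    diagonal_conjTranspose]
  exact ⟨congrArg diagonal diagVec_mul_self, congrArg diagonal star_diagVec⟩

theorem isStarProjection_Phi3 : IsStarProjection Phi3 := by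
  rw [isStarProjection_iff', Phi3_eq_vecMulVec, smul_mul_smul_comm, vecMulVec_mul_vecMulVec,
    diagVec_dotProduct_self, star_smul, star_eq_conjTranspose, conjTranspose_vecMulVec,
    star_diagVec]
  constructor
  · rw [vecMulVec_smul, smul_smul]; norm_num
  · simp

theorem P3_mul_Phi3 : P3 * Phi3 = Phi3 := by
  rw [Phi3_eq_vecMulVec, Matrix.mul_smul, mul_vecMulVec, P3_eq_diagonal]
  congr 2
  ext p
  rw [mulVec_diagonal, ← Pi.mul_apply, diagVec_mul_self]

theorem Phi3_mul_P3 : Phi3 * P3 = Phi3 := by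
  rw [Phi3_eq_vecMulVec, Matrix.smul_mul, vecMulVec_mul, P3_eq_diagonal]
  congr 2
  ext p
  rw [vecMul_diagonal, ← Pi.mul_apply, diagVec_mul_self]

theorem P3_mul_swapMatrix : P3 * swapMatrix (Fin 3) = P3 := by
  ext p ⟨k, l⟩
  simp [P3, mul_swapMatrix_apply]
  grind

theorem swapMatrix_mul_P3 : swapMatrix (Fin 3) * P3 = P3 := by
  ext ⟨i, j⟩ q
  simp [P3, swapMatrix_mul_apply]
  grind

theorem trace_P3 : P3.trace = 3 := by
  rw [P3_eq_diagonal, trace_diagonal, Fintype.sum_prod_type]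
  simp [diagVec]

theorem trace_Phi3 : Phi3.trace = 1 := by
  rw [Phi3_eq_vecMulVec, trace_smul, trace_vecMulVec, diagVec_dotProduct_self]
  norm_num

open scoped MatrixOrder in
theorem isState_Phi3 : IsState Phi3 :=
  ⟨nonneg_iff_posSemidef.mp isStarProjection_Phi3.nonneg, trace_Phi3⟩

theorem ptranspose_two_smul_sub_Phi3 :
    ptranspose ((2 : ℂ) • (P3 - Phi3) - Phi3) = (2 : ℂ) • P3 - swapMatrix (Fin 3) := by
  ext ⟨i, j⟩ ⟨k, l⟩
  simp [ptranspose, P3, Phi3, swapMatrix]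
  grind

theorem dephase_apply (X : Matrix (Fin 3) (Fin 3) ℂ) (i j : Fin 3) :
    dephase X i j = if i = j then X i j else 0 := rfl

theorem idTensor_Omega3_Phi3 : idTensor (Fin 3) Omega3 Phi3 = omega3 := by
  ext ⟨i, j⟩ ⟨k, l⟩
  simp [idTensor_apply, Omega3, dephase_apply, omega3, P3, Phi3]
  grind

section Witness

open scoped Matrix.Norms.L2Operator

theorem two_le_temperedNeg_omega3 : 2 ≤ temperedNeg omega3 := by
  set q := P3 - Phi3
  set X := (2 : ℂ) • q - Phi3
  have hq : IsStarProjection q :=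
    isStarProjection_Phi3.sub_of_mul_eq_right isStarProjection_P3 P3_mul_Phi3
  have hΦq : Phi3 * q = 0 := by
    rw [mul_sub, Phi3_mul_P3, isStarProjection_Phi3.isIdempotentElem.eq, sub_self]
  have htrace : q.trace = 2 := by
    rw [trace_sub, trace_P3, trace_Phi3]; norm_num
  have hq0 : q ≠ 0 := fun h => by simp [h] at htrace
  have hXω : X * omega3 = q := by
    rw [omega3, Matrix.mul_smul, sub_mul, smul_mul_assoc, hq.isIdempotentElem.eq, hΦq, sub_zero,
      smul_smul]
    norm_num
  have hherm : X.IsHermitian := isHermitian_iff_isSelfAdjoint.mpr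
    (((IsSelfAdjoint.ofNat 2).smul hq.isSelfAdjoint).sub isStarProjection_Phi3.isSelfAdjoint)
  have hΓ : opNorm (ptranspose X) ≤ 1 := by
    rw [ptranspose_two_smul_sub_Phi3, opNorm_eq_norm]
    refine (norm_eq_one_of_isSelfAdjoint_of_mul_self ?_ ?_).le
    · exact ((IsSelfAdjoint.ofNat 2).smul isStarProjection_P3.isSelfAdjoint).sub
        isSelfAdjoint_swapMatrix
    · simp only [sub_mul, mul_sub, smul_mul_assoc, mul_smul_comm,
        isStarProjection_P3.isIdempotentElem.eq, P3_mul_swapMatrix, swapMatrix_mul_P3,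
        swapMatrix_mul_self]
      module
  have hnorm : opNorm X = ((X * omega3).trace).re := by
    rw [opNorm_eq_norm, hq.norm_two_smul_sub isStarProjection_Phi3 hΦq hq0, hXω, htrace]
    norm_num
  calc (2 : ℝ) = ((X * omega3).trace).re := by rw [hXω, htrace]; norm_num
    _ ≤ temperedNeg omega3 := le_temperedNegRel hherm hΓ hnorm

end Witness

/-- **The Choi state of `Ω₃` is `ω₃`, and its channel tempered negativity is at least 2**,
i.e. its tempered logarithmic negativity is at least 1. -/
theorem chanTemperedNeg_Omega3 :
    (idTensor (Fin 3) Omega3) Phi3 = omega3 ∧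
    2 ≤ chanTemperedNeg Omega3 ∧
    1 ≤ Real.logb 2 (chanTemperedNeg Omega3) := by
  have hchan : 2 ≤ chanTemperedNeg Omega3 :=
    calc (2 : ℝ) ≤ temperedNeg omega3 := two_le_temperedNeg_omega3
      _ = temperedNeg (idTensor (Fin 3) Omega3 Phi3) := by rw [idTensor_Omega3_Phi3]
      _ ≤ chanTemperedNeg Omega3 := temperedNeg_le_chanTemperedNeg Omega3 isState_Phi3
  refine ⟨idTensor_Omega3_Phi3, hchan, ?_⟩
  calc (1 : ℝ) = Real.logb 2 2 := (Real.logb_self_eq_one one_lt_two).symm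
    _ ≤ Real.logb 2 (chanTemperedNeg Omega3) := Real.logb_le_logb_of_le one_lt_two two_pos hchan
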